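/- For misère NimG-RM without loops, if some vertices have weight 0, deleting them does not change the misère outcome: o⁻(G,u,w) = o⁻(G[{v : w(v) > 0}], u, w) whenever w(u) > 0. -/
import Mathlib


universe u
mutual
  inductive GNormalWin {α : Type u} (moves : α → α → Prop) : α → Prop
    | step {p q : α} : moves p q → GNormalLose moves q → GNormalWin moves p
  inductive GNormalLose {α : Type u} (moves : α → α → Prop) : α → Prop
    | intro {p : α} : (∀ q, moves p q → GNormalWin moves q) → GNormalLose moves p
end

mutual
  inductive GMisereWin {α : Type u} (moves : α → α → Prop) : α → Prop
    | terminal {p : α} : (∀ q, ¬ moves p q) → GMisereWin moves p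
    | step {p q : α} : moves p q → GMisereLose moves q → GMisereWin moves p
  inductive GMisereLose {α : Type u} (moves : α → α → Prop) : α → Prop
    | intro {p q₀ : α} : moves p q₀ → (∀ q, moves p q → GMisereWin moves q) → GMisereLose moves p
end

def nimMove {V : Type u} (adj : V → V → Prop) (p q : V × (V → ℕ)) : Prop :=
  adj p.1 q.1 ∧ q.2 p.1 < p.2 p.1 ∧ ∀ v, v ≠ p.1 → q.2 v = p.2 v

mutual
  inductive NimRMWin {V : Type u} (adj : V → V → Prop) : V × (V → ℕ) → Prop
    | zero {p} : p.2 p.1 = 0 → NimRMWin adj p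
    | step {p q} : nimMove adj p q → NimRMLose adj q → NimRMWin adj p
  inductive NimRMLose {V : Type u} (adj : V → V → Prop) : V × (V → ℕ) → Prop
    | intro {p} : p.2 p.1 ≠ 0 → (∀ q, nimMove adj p q → NimRMWin adj q) → NimRMLose adj p
end

def vgMove {V : Type u} (A : V → V → Prop) (p q : Set V × V) : Prop :=
  A p.2 q.2 ∧ q.2 ∈ p.1 ∧ q.2 ≠ p.2 ∧ q.1 = p.1 \ {p.2}

def addOut {V : Type u} (A : V → V → Prop) : V ⊕ V → V ⊕ V → Prop
  | .inl a, .inl b => A a b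
  | .inl a, .inr b => a = b
  | _, _ => False

def MaxMatching {V : Type u} (G : SimpleGraph V) (M : G.Subgraph) : Prop :=
  M.IsMatching ∧ ∀ N : G.Subgraph, N.IsMatching → N.edgeSet.ncard ≤ M.edgeSet.ncard

def NimInv {V : Type} (w f : V → ℕ) : Prop := ∀ v, w v = 0 → f v = 0

theorem nimInv_move {V : Type} {adj : V → V → Prop} {w : V → ℕ} {p q : V × (V → ℕ)}
    (h : nimMove adj p q) (hI : NimInv w p.2) : NimInv w q.2 := by
  intro v hv
  by_cases hvp : v = p.1
  · subst hvp
    have h1 := h.2.1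
    have h2 := hI p.1 hv
    omega
  · rw [h.2.2 v hvp]; exact hI v hv

theorem nim_win_to {V : Type} (G : SimpleGraph V) (w : V → ℕ) {p : V × (V → ℕ)}
    (h : NimRMWin G.Adj p) :
    NimInv w p.2 → 0 < w p.1 →
      NimRMWin (fun a b => G.Adj a b ∧ 0 < w a ∧ 0 < w b) p :=
  NimRMWin.rec
    (motive_1 := fun a _ => NimInv w a.2 → 0 < w a.1 →
      NimRMWin (fun a b => G.Adj a b ∧ 0 < w a ∧ 0 < w b) a)
    (motive_2 := fun a _ => NimInv w a.2 →
      NimRMLose (fun a b => G.Adj a b ∧ 0 < w a ∧ 0 < w b) a)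
    (fun hz _ _ => .zero hz)
    (fun {p q} hm hl ih hI hp =>
      have hIq : NimInv w q.2 := nimInv_move hm hI
      have hne : q.2 q.1 ≠ 0 := match hl with | .intro h _ => h
      have hq : 0 < w q.1 := Nat.pos_of_ne_zero (fun h0 => hne (hIq q.1 h0))
      .step ⟨⟨hm.1, hp, hq⟩, hm.2⟩ (ih hIq))
    (fun {p} hne _hall ih hI =>
      .intro hne (fun q hq =>
        ih q ⟨hq.1.1, hq.2⟩ (nimInv_move ⟨hq.1.1, hq.2⟩ hI) hq.1.2.2))
    h

theorem nim_win_of {V : Type} (G : SimpleGraph V) (w : V → ℕ) {p : V × (V → ℕ)}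
    (h : NimRMWin (fun a b => G.Adj a b ∧ 0 < w a ∧ 0 < w b) p) :
    NimInv w p.2 → NimRMWin G.Adj p :=
  NimRMWin.rec
    (motive_1 := fun a _ => NimInv w a.2 → NimRMWin G.Adj a)
    (motive_2 := fun a _ => NimInv w a.2 → NimRMLose G.Adj a)
    (fun hz _ => .zero hz)
    (fun hm _hl ih hI => .step ⟨hm.1.1, hm.2⟩ (ih (nimInv_move hm hI)))
    (fun {p} hne _hall ih hI =>
      have hp1 : 0 < w p.1 := Nat.pos_of_ne_zero (fun h0 => hne (hI p.1 h0))
      .intro hne (fun q hq =>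
        if h0 : w q.1 = 0 then
          .zero ((nimInv_move hq hI) q.1 h0)
        else
          ih q ⟨⟨hq.1, hp1, Nat.pos_of_ne_zero h0⟩, hq.2⟩ (nimInv_move hq hI)))
    h

/-- Misère NimG-RM without loops: if the starting vertex has positive weight, deleting the
vertices of weight 0 does not change the misère outcome. -/
theorem stmt18 {V : Type} [Fintype V] (G : SimpleGraph V) (w : V → ℕ) (u : V)
    (hu : 0 < w u) :
    NimRMWin G.Adj (u, w) ↔
      NimRMWin (fun a b => G.Adj a b ∧ 0 < w a ∧ 0 < w b) (u, w) := by
  have hI : NimInv w w := fun v hv => hv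
  exact ⟨fun h => nim_win_to G w h hI hu, fun h => nim_win_of G w h hI⟩
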